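/- Unique solvability of the discrete concentration step under a time-step restriction. Let φ_*, d_* > 0 and K₂, B ≥ 0. There exists τ* > 0, depending only on φ_*, d_*, K₂ and B, with the following property. Let Δt ∈ (0, τ*]; let φ and q_P be cell-centered grid functions with φ_{i,j} ≥ φ_* and |q_P(i,j)| ≤ K₂ for all (i,j); let Dˣ be an x-face grid function with Dˣ_{i,j} ≥ d_* and Dʸ a y-face grid function with Dʸ_{i,j} ≥ d_*; let Uˣ be an x-face grid function and Uʸ a y-face grid function with |Uˣ_{i,j}| ≤ B and |Uʸ_{i,j}| ≤ B for all (i,j); and let the data Cⁿ, g (cell-centered), W^{x,n} (x-face) and W^{y,n} (y-face) be arbitrary grid functions. Then there exist unique grid functions (C, Vˣ, Vʸ, Wˣ, Wʸ) with C cell-centered, Vˣ, Wˣ x-face valued and Vʸ, Wʸ y-face valued, satisfying pointwise on the grid: ℒ[φ·(C − Cⁿ)/Δt] + L_y δ_x[(Wˣ + W^{x,n})/2] + L_x δ_y[(Wʸ + W^{y,n})/2] − ℒ[q_P·(C + Cⁿ)/2] = ℒ[g]; L_x Vˣ + δ_x C = 0; L_y Vʸ + δ_y C = 0; Wˣ =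 Uˣ·(T_x C) + Dˣ·Vˣ; and Wʸ = Uʸ·(T_y C) + Dʸ·Vʸ. -/
import Mathlib


open Finset

/-- A periodic grid function on the `Nx × Ny` staggered grid (periodicity is
automatic in the `ZMod` indexing).  The same index set represents
cell-centered, x-face and y-face values. -/
abbrev GridFn (Nx Ny : ℕ) := ZMod Nx × ZMod Ny → ℝ

variable {Nx Ny : ℕ}

/-- Discrete `L²` inner product `(ω, σ) = ∑ᵢⱼ hx·hy·ωᵢⱼ·σᵢⱼ`. -/
noncomputable def gip [NeZero Nx] [NeZero Ny] (hx hy : ℝ) (ω σ : GridFn Nx Ny) : ℝ :=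
  ∑ p : ZMod Nx × ZMod Ny, hx * hy * ω p * σ p

/-- Discrete `L²` norm. -/
noncomputable def gnorm [NeZero Nx] [NeZero Ny] (hx hy : ℝ) (ω : GridFn Nx Ny) : ℝ :=
  Real.sqrt (gip hx hy ω ω)

/-- `δ_x` mapping cell-centered functions to x-face functions. -/
noncomputable def dxc (hx : ℝ) (ω : GridFn Nx Ny) : GridFn Nx Ny :=
  fun p => (ω (p.1 + 1, p.2) - ω p) / hx

/-- `δ_x` mapping x-face functions to cell-centered functions. -/
noncomputable def dxf (hx : ℝ) (ν : GridFn Nx Ny) : GridFn Nx Ny :=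
  fun p => (ν p - ν (p.1 - 1, p.2)) / hx

/-- `δ_y` mapping cell-centered functions to y-face functions. -/
noncomputable def dyc (hy : ℝ) (ω : GridFn Nx Ny) : GridFn Nx Ny :=
  fun p => (ω (p.1, p.2 + 1) - ω p) / hy

/-- `δ_y` mapping y-face functions to cell-centered functions. -/
noncomputable def dyf (hy : ℝ) (ν : GridFn Nx Ny) : GridFn Nx Ny :=
  fun p => (ν p - ν (p.1, p.2 - 1)) / hy

/-- Second difference `δ_x²`. -/
noncomputable def dxx (hx : ℝ) (ω : GridFn Nx Ny) : GridFn Nx Ny :=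
  fun p => (ω (p.1 + 1, p.2) - 2 * ω p + ω (p.1 - 1, p.2)) / hx ^ 2

/-- Second difference `δ_y²`. -/
noncomputable def dyy (hy : ℝ) (ω : GridFn Nx Ny) : GridFn Nx Ny :=
  fun p => (ω (p.1, p.2 + 1) - 2 * ω p + ω (p.1, p.2 - 1)) / hy ^ 2

/-- Compact operator `L_x = Id + (hx²/24)·δ_x²`. -/
noncomputable def opLx (hx : ℝ) (ω : GridFn Nx Ny) : GridFn Nx Ny :=
  fun p => ω p + hx ^ 2 / 24 * dxx hx ω p

/-- Compact operator `L_y = Id + (hy²/24)·δ_y²`. -/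
noncomputable def opLy (hy : ℝ) (ω : GridFn Nx Ny) : GridFn Nx Ny :=
  fun p => ω p + hy ^ 2 / 24 * dyy hy ω p

/-- Compact operator `ℒ = L_x ∘ L_y`. -/
noncomputable def opLL (hx hy : ℝ) (ω : GridFn Nx Ny) : GridFn Nx Ny :=
  opLx hx (opLy hy ω)

/-- Cubic interpolation operator `T_x` (cell-centered to x-face). -/
noncomputable def Tx (ω : GridFn Nx Ny) : GridFn Nx Ny :=
  fun p => (-ω (p.1 - 1, p.2) + 9 * ω p + 9 * ω (p.1 + 1, p.2) - ω (p.1 + 2, p.2)) / 16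

/-- Cubic interpolation operator `T_y` (cell-centered to y-face). -/
noncomputable def Ty (ω : GridFn Nx Ny) : GridFn Nx Ny :=
  fun p => (-ω (p.1, p.2 - 1) + 9 * ω p + 9 * ω (p.1, p.2 + 1) - ω (p.1, p.2 + 2)) / 16

section Aux

variable {Nx Ny : ℕ}

/-- tuple of unknowns -/
abbrev GV (Nx Ny : ℕ) := GridFn Nx Ny × GridFn Nx Ny × GridFn Nx Ny
  × GridFn Nx Ny × GridFn Nx Ny

lemma sum_shift [NeZero Nx] [NeZero Ny] (f : GridFn Nx Ny) (a : ZMod Nx) (b : ZMod Ny) :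
    ∑ p : ZMod Nx × ZMod Ny, f (p.1 + a, p.2 + b) = ∑ p, f p :=
  Fintype.sum_equiv (Equiv.addRight ((a, b) : ZMod Nx × ZMod Ny)) _ _ (fun _ => rfl)

lemma sum_shift_x [NeZero Nx] [NeZero Ny] (f : GridFn Nx Ny) (a : ZMod Nx) :
    ∑ p : ZMod Nx × ZMod Ny, f (p.1 + a, p.2) = ∑ p, f p := by
  simpa using sum_shift f a 0

lemma sum_shift_y [NeZero Nx] [NeZero Ny] (f : GridFn Nx Ny) (b : ZMod Ny) :
    ∑ p : ZMod Nx × ZMod Ny, f (p.1, p.2 + b) = ∑ p, f p := by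
  simpa using sum_shift f 0 b

/-- Summation by parts in `x`. -/
lemma sbp_x [NeZero Nx] [NeZero Ny] (hx : ℝ) (ν ω : GridFn Nx Ny) :
    ∑ p : ZMod Nx × ZMod Ny, dxf hx ν p * ω p
      = -∑ p : ZMod Nx × ZMod Ny, ν p * dxc hx ω p := by
  have h := sum_shift_x (fun p => ν (p.1 - 1, p.2) * ω p / hx) 1
  simp only [add_sub_cancel_right, Prod.mk.eta] at h
  have e1 : ∀ p : ZMod Nx × ZMod Ny, dxf hx ν p * ω p
      = ν p * ω p / hx - ν (p.1 - 1, p.2) * ω p / hx := fun p => by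
    simp only [dxf]; ring
  have e2 : ∀ p : ZMod Nx × ZMod Ny, ν p * dxc hx ω p
      = ν p * ω (p.1 + 1, p.2) / hx - ν p * ω p / hx := fun p => by
    simp only [dxc]; ring
  simp only [e1, e2, Finset.sum_sub_distrib]
  linarith [h]

/-- Summation by parts in `y`. -/
lemma sbp_y [NeZero Nx] [NeZero Ny] (hy : ℝ) (ν ω : GridFn Nx Ny) :
    ∑ p : ZMod Nx × ZMod Ny, dyf hy ν p * ω p
      = -∑ p : ZMod Nx × ZMod Ny, ν p * dyc hy ω p := by
  have h := sum_shift_y (fun p => ν (p.1, p.2 - 1) * ω p / hy) 1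
  simp only [add_sub_cancel_right, Prod.mk.eta] at h
  have e1 : ∀ p : ZMod Nx × ZMod Ny, dyf hy ν p * ω p
      = ν p * ω p / hy - ν (p.1, p.2 - 1) * ω p / hy := fun p => by
    simp only [dyf]; ring
  have e2 : ∀ p : ZMod Nx × ZMod Ny, ν p * dyc hy ω p
      = ν p * ω (p.1, p.2 + 1) / hy - ν p * ω p / hy := fun p => by
    simp only [dyc]; ring
  simp only [e1, e2, Finset.sum_sub_distrib]
  linarith [h]

lemma dxx_eq (hx : ℝ) (ω : GridFn Nx Ny) : dxx hx ω = dxf hx (dxc hx ω) := by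
  funext p
  simp only [dxx, dxf, dxc, sub_add_cancel, Prod.mk.eta]
  ring

lemma dyy_eq (hy : ℝ) (ω : GridFn Nx Ny) : dyy hy ω = dyf hy (dyc hy ω) := by
  funext p
  simp only [dyy, dyf, dyc, sub_add_cancel, Prod.mk.eta]
  ring

lemma adj_dxx [NeZero Nx] [NeZero Ny] (hx : ℝ) (ω σ : GridFn Nx Ny) :
    ∑ p : ZMod Nx × ZMod Ny, dxx hx ω p * σ p
      = ∑ p : ZMod Nx × ZMod Ny, ω p * dxx hx σ p := by
  rw [dxx_eq hx ω, dxx_eq hx σ, sbp_x]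
  rw [show (∑ p : ZMod Nx × ZMod Ny, ω p * dxf hx (dxc hx σ) p)
      = ∑ p : ZMod Nx × ZMod Ny, dxf hx (dxc hx σ) p * ω p from
    Finset.sum_congr rfl fun p _ => mul_comm _ _, sbp_x]
  exact neg_inj.mpr (Finset.sum_congr rfl fun p _ => mul_comm _ _)

lemma adj_dyy [NeZero Nx] [NeZero Ny] (hy : ℝ) (ω σ : GridFn Nx Ny) :
    ∑ p : ZMod Nx × ZMod Ny, dyy hy ω p * σ p
      = ∑ p : ZMod Nx × ZMod Ny, ω p * dyy hy σ p := by
  rw [dyy_eq hy ω, dyy_eq hy σ, sbp_y]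
  rw [show (∑ p : ZMod Nx × ZMod Ny, ω p * dyf hy (dyc hy σ) p)
      = ∑ p : ZMod Nx × ZMod Ny, dyf hy (dyc hy σ) p * ω p from
    Finset.sum_congr rfl fun p _ => mul_comm _ _, sbp_y]
  exact neg_inj.mpr (Finset.sum_congr rfl fun p _ => mul_comm _ _)

lemma adj_opLx [NeZero Nx] [NeZero Ny] (hx : ℝ) (ω σ : GridFn Nx Ny) :
    ∑ p : ZMod Nx × ZMod Ny, opLx hx ω p * σ p
      = ∑ p : ZMod Nx × ZMod Ny, ω p * opLx hx σ p := by
  have hd := adj_dxx hx ω σ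
  have e1 : ∀ p : ZMod Nx × ZMod Ny, opLx hx ω p * σ p
      = ω p * σ p + hx ^ 2 / 24 * (dxx hx ω p * σ p) := fun p => by
    simp only [opLx]; ring
  have e2 : ∀ p : ZMod Nx × ZMod Ny, ω p * opLx hx σ p
      = ω p * σ p + hx ^ 2 / 24 * (ω p * dxx hx σ p) := fun p => by
    simp only [opLx]; ring
  simp only [e1, e2, Finset.sum_add_distrib, ← Finset.mul_sum, hd]

lemma adj_opLy [NeZero Nx] [NeZero Ny] (hy : ℝ) (ω σ : GridFn Nx Ny) :
    ∑ p : ZMod Nx × ZMod Ny, opLy hy ω p * σ p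
      = ∑ p : ZMod Nx × ZMod Ny, ω p * opLy hy σ p := by
  have hd := adj_dyy hy ω σ
  have e1 : ∀ p : ZMod Nx × ZMod Ny, opLy hy ω p * σ p
      = ω p * σ p + hy ^ 2 / 24 * (dyy hy ω p * σ p) := fun p => by
    simp only [opLy]; ring
  have e2 : ∀ p : ZMod Nx × ZMod Ny, ω p * opLy hy σ p
      = ω p * σ p + hy ^ 2 / 24 * (ω p * dyy hy σ p) := fun p => by
    simp only [opLy]; ring
  simp only [e1, e2, Finset.sum_add_distrib, ← Finset.mul_sum, hd]

lemma opLx_opLy (hx hy : ℝ) (ω : GridFn Nx Ny) :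
    opLx hx (opLy hy ω) = opLy hy (opLx hx ω) := by
  funext p
  simp only [opLx, opLy, dxx, dyy]
  ring

lemma adj_opLL [NeZero Nx] [NeZero Ny] (hx hy : ℝ) (a b : GridFn Nx Ny) :
    ∑ p : ZMod Nx × ZMod Ny, opLL hx hy a p * b p
      = ∑ p : ZMod Nx × ZMod Ny, a p * opLL hx hy b p := by
  have h1 := adj_opLx hx (opLy hy a) b
  have h2 := adj_opLy hy a (opLx hx b)
  have h3 : opLy hy (opLx hx b) = opLL hx hy b := (opLx_opLy hx hy b).symm
  calc ∑ p : ZMod Nx × ZMod Ny, opLL hx hy a p * b p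
      = ∑ p : ZMod Nx × ZMod Ny, opLy hy a p * opLx hx b p := h1
    _ = ∑ p : ZMod Nx × ZMod Ny, a p * opLy hy (opLx hx b) p := h2
    _ = ∑ p : ZMod Nx × ZMod Ny, a p * opLL hx hy b p := by rw [h3]

lemma dxc_opLy (hx hy : ℝ) (ω : GridFn Nx Ny) :
    dxc hx (opLy hy ω) = opLy hy (dxc hx ω) := by
  funext p
  simp only [dxc, opLy, dyy]
  ring

lemma dyc_opLx (hx hy : ℝ) (ω : GridFn Nx Ny) :
    dyc hy (opLx hx ω) = opLx hx (dyc hy ω) := by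
  funext p
  simp only [dyc, opLx, dxx]
  ring

lemma dxc_opLx (hx : ℝ) (ω : GridFn Nx Ny) :
    dxc hx (opLx hx ω) = opLx hx (dxc hx ω) := by
  funext p
  simp only [dxc, opLx, dxx, add_sub_cancel_right, sub_add_cancel, Prod.mk.eta]
  ring

lemma dyc_opLy (hy : ℝ) (ω : GridFn Nx Ny) :
    dyc hy (opLy hy ω) = opLy hy (dyc hy ω) := by
  funext p
  simp only [dyc, opLy, dyy, add_sub_cancel_right, sub_add_cancel, Prod.mk.eta]
  ring

lemma dxc_opLL (hx hy : ℝ) (ω : GridFn Nx Ny) :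
    dxc hx (opLL hx hy ω) = opLx hx (opLy hy (dxc hx ω)) := by
  show dxc hx (opLx hx (opLy hy ω)) = _
  rw [dxc_opLx, dxc_opLy]

lemma dyc_opLL (hx hy : ℝ) (ω : GridFn Nx Ny) :
    dyc hy (opLL hx hy ω) = opLy hy (opLx hx (dyc hy ω)) := by
  show dyc hy (opLx hx (opLy hy ω)) = _
  rw [dyc_opLx, dyc_opLy, opLx_opLy]

/-- `L_x` as a linear map. -/
noncomputable def lmLx (hx : ℝ) : GridFn Nx Ny →ₗ[ℝ] GridFn Nx Ny where
  toFun := opLx hx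
  map_add' a b := by
    funext p
    simp only [opLx, dxx, Pi.add_apply]
    ring
  map_smul' c a := by
    funext p
    simp only [opLx, dxx, Pi.smul_apply, smul_eq_mul, RingHom.id_apply]
    ring

/-- `L_y` as a linear map. -/
noncomputable def lmLy (hy : ℝ) : GridFn Nx Ny →ₗ[ℝ] GridFn Nx Ny where
  toFun := opLy hy
  map_add' a b := by
    funext p
    simp only [opLy, dyy, Pi.add_apply]
    ring
  map_smul' c a := by
    funext p
    simp only [opLy, dyy, Pi.smul_apply, smul_eq_mul, RingHom.id_apply]
    ring

@[simp] lemma lmLx_apply (hx : ℝ) (ω : GridFn Nx Ny) : lmLx hx ω = opLx hx ω := rfl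
@[simp] lemma lmLy_apply (hy : ℝ) (ω : GridFn Nx Ny) : lmLy hy ω = opLy hy ω := rfl

lemma dxc_sq_bound [NeZero Nx] [NeZero Ny] {hx : ℝ} (hhx : 0 < hx) (ω : GridFn Nx Ny) :
    ∑ p : ZMod Nx × ZMod Ny, dxc hx ω p ^ 2
      ≤ 4 / hx ^ 2 * ∑ p : ZMod Nx × ZMod Ny, ω p ^ 2 := by
  have hs : ∑ p : ZMod Nx × ZMod Ny, ω (p.1 + 1, p.2) ^ 2
      = ∑ p : ZMod Nx × ZMod Ny, ω p ^ 2 := by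
    simpa using sum_shift_x (fun q => ω q ^ 2) 1
  have hb : ∀ p : ZMod Nx × ZMod Ny, dxc hx ω p ^ 2
      ≤ (2 * ω (p.1 + 1, p.2) ^ 2 + 2 * ω p ^ 2) / hx ^ 2 := by
    intro p
    simp only [dxc, div_pow]
    apply div_le_div_of_nonneg_right ?_ (by positivity)
    nlinarith [sq_nonneg (ω (p.1 + 1, p.2) + ω p)]
  calc ∑ p : ZMod Nx × ZMod Ny, dxc hx ω p ^ 2
      ≤ ∑ p : ZMod Nx × ZMod Ny, (2 * ω (p.1 + 1, p.2) ^ 2 + 2 * ω p ^ 2) / hx ^ 2 :=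
        Finset.sum_le_sum fun p _ => hb p
    _ = 4 / hx ^ 2 * ∑ p : ZMod Nx × ZMod Ny, ω p ^ 2 := by
        have e : ∀ p : ZMod Nx × ZMod Ny, (2 * ω (p.1 + 1, p.2) ^ 2 + 2 * ω p ^ 2) / hx ^ 2
            = 2 / hx ^ 2 * ω (p.1 + 1, p.2) ^ 2 + 2 / hx ^ 2 * ω p ^ 2 := fun p => by ring
        simp only [e, Finset.sum_add_distrib, ← Finset.mul_sum]
        rw [hs]; ring

lemma dyc_sq_bound [NeZero Nx] [NeZero Ny] {hy : ℝ} (hhy : 0 < hy) (ω : GridFn Nx Ny) :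
    ∑ p : ZMod Nx × ZMod Ny, dyc hy ω p ^ 2
      ≤ 4 / hy ^ 2 * ∑ p : ZMod Nx × ZMod Ny, ω p ^ 2 := by
  have hs : ∑ p : ZMod Nx × ZMod Ny, ω (p.1, p.2 + 1) ^ 2
      = ∑ p : ZMod Nx × ZMod Ny, ω p ^ 2 := by
    simpa using sum_shift_y (fun q => ω q ^ 2) 1
  have hb : ∀ p : ZMod Nx × ZMod Ny, dyc hy ω p ^ 2
      ≤ (2 * ω (p.1, p.2 + 1) ^ 2 + 2 * ω p ^ 2) / hy ^ 2 := by
    intro p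
    simp only [dyc, div_pow]
    apply div_le_div_of_nonneg_right ?_ (by positivity)
    nlinarith [sq_nonneg (ω (p.1, p.2 + 1) + ω p)]
  calc ∑ p : ZMod Nx × ZMod Ny, dyc hy ω p ^ 2
      ≤ ∑ p : ZMod Nx × ZMod Ny, (2 * ω (p.1, p.2 + 1) ^ 2 + 2 * ω p ^ 2) / hy ^ 2 :=
        Finset.sum_le_sum fun p _ => hb p
    _ = 4 / hy ^ 2 * ∑ p : ZMod Nx × ZMod Ny, ω p ^ 2 := by
        have e : ∀ p : ZMod Nx × ZMod Ny, (2 * ω (p.1, p.2 + 1) ^ 2 + 2 * ω p ^ 2) / hy ^ 2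
            = 2 / hy ^ 2 * ω (p.1, p.2 + 1) ^ 2 + 2 / hy ^ 2 * ω p ^ 2 := fun p => by ring
        simp only [e, Finset.sum_add_distrib, ← Finset.mul_sum]
        rw [hs]; ring

lemma coer_opLx [NeZero Nx] [NeZero Ny] {hx : ℝ} (hhx : 0 < hx) (ω : GridFn Nx Ny) :
    5 / 6 * ∑ p : ZMod Nx × ZMod Ny, ω p ^ 2
      ≤ ∑ p : ZMod Nx × ZMod Ny, opLx hx ω p * ω p := by
  have e3 : ∑ p : ZMod Nx × ZMod Ny, dxx hx ω p * ω p
      = -∑ p : ZMod Nx × ZMod Ny, dxc hx ω p ^ 2 := by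
    rw [dxx_eq, sbp_x]
    exact neg_inj.mpr (Finset.sum_congr rfl fun p _ => by ring)
  have e1 : ∀ p : ZMod Nx × ZMod Ny, opLx hx ω p * ω p
      = ω p ^ 2 + hx ^ 2 / 24 * (dxx hx ω p * ω p) := fun p => by
    simp only [opLx]; ring
  have hmain : ∑ p : ZMod Nx × ZMod Ny, opLx hx ω p * ω p
      = ∑ p : ZMod Nx × ZMod Ny, ω p ^ 2
        - hx ^ 2 / 24 * ∑ p : ZMod Nx × ZMod Ny, dxc hx ω p ^ 2 := by
    simp only [e1, Finset.sum_add_distrib, ← Finset.mul_sum, e3]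
    ring
  have hsq := dxc_sq_bound hhx ω
  have hne : hx ≠ 0 := hhx.ne'
  have h6 : hx ^ 2 / 24 * ∑ p : ZMod Nx × ZMod Ny, dxc hx ω p ^ 2
      ≤ 1 / 6 * ∑ p : ZMod Nx × ZMod Ny, ω p ^ 2 := by
    calc hx ^ 2 / 24 * ∑ p : ZMod Nx × ZMod Ny, dxc hx ω p ^ 2
        ≤ hx ^ 2 / 24 * (4 / hx ^ 2 * ∑ p : ZMod Nx × ZMod Ny, ω p ^ 2) :=
          mul_le_mul_of_nonneg_left hsq (by positivity)
      _ = 1 / 6 * ∑ p : ZMod Nx × ZMod Ny, ω p ^ 2 := by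
          field_simp
          ring
  linarith [hmain, h6]

lemma coer_opLy [NeZero Nx] [NeZero Ny] {hy : ℝ} (hhy : 0 < hy) (ω : GridFn Nx Ny) :
    5 / 6 * ∑ p : ZMod Nx × ZMod Ny, ω p ^ 2
      ≤ ∑ p : ZMod Nx × ZMod Ny, opLy hy ω p * ω p := by
  have e3 : ∑ p : ZMod Nx × ZMod Ny, dyy hy ω p * ω p
      = -∑ p : ZMod Nx × ZMod Ny, dyc hy ω p ^ 2 := by
    rw [dyy_eq, sbp_y]
    exact neg_inj.mpr (Finset.sum_congr rfl fun p _ => by ring)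
  have e1 : ∀ p : ZMod Nx × ZMod Ny, opLy hy ω p * ω p
      = ω p ^ 2 + hy ^ 2 / 24 * (dyy hy ω p * ω p) := fun p => by
    simp only [opLy]; ring
  have hmain : ∑ p : ZMod Nx × ZMod Ny, opLy hy ω p * ω p
      = ∑ p : ZMod Nx × ZMod Ny, ω p ^ 2
        - hy ^ 2 / 24 * ∑ p : ZMod Nx × ZMod Ny, dyc hy ω p ^ 2 := by
    simp only [e1, Finset.sum_add_distrib, ← Finset.mul_sum, e3]
    ring
  have hsq := dyc_sq_bound hhy ω
  have hne : hy ≠ 0 := hhy.ne'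
  have h6 : hy ^ 2 / 24 * ∑ p : ZMod Nx × ZMod Ny, dyc hy ω p ^ 2
      ≤ 1 / 6 * ∑ p : ZMod Nx × ZMod Ny, ω p ^ 2 := by
    calc hy ^ 2 / 24 * ∑ p : ZMod Nx × ZMod Ny, dyc hy ω p ^ 2
        ≤ hy ^ 2 / 24 * (4 / hy ^ 2 * ∑ p : ZMod Nx × ZMod Ny, ω p ^ 2) :=
          mul_le_mul_of_nonneg_left hsq (by positivity)
      _ = 1 / 6 * ∑ p : ZMod Nx × ZMod Ny, ω p ^ 2 := by
          field_simp
          ring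
  linarith [hmain, h6]

lemma sumsq_zero {α : Type*} [Fintype α] (f : α → ℝ)
    (h : ∑ a : α, f a ^ 2 ≤ 0) : ∀ a, f a = 0 := by
  have hz : ∑ a : α, f a ^ 2 = 0 :=
    le_antisymm h (Finset.sum_nonneg fun a _ => sq_nonneg _)
  intro a
  have := (Finset.sum_eq_zero_iff_of_nonneg (fun a _ => sq_nonneg (f a))).mp hz a
    (Finset.mem_univ a)
  exact (pow_eq_zero_iff two_ne_zero).mp this

lemma inj_lmLx [NeZero Nx] [NeZero Ny] {hx : ℝ} (hhx : 0 < hx) :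
    Function.Injective (lmLx (Nx := Nx) (Ny := Ny) hx) := by
  intro a b hab
  have h0 : opLx hx (a - b) = 0 := by
    have h := map_sub (lmLx (Nx := Nx) (Ny := Ny) hx) a b
    rw [hab, sub_self] at h
    simpa using h
  have hco := coer_opLx hhx (a - b)
  rw [h0] at hco
  simp only [Pi.zero_apply, zero_mul, Finset.sum_const_zero] at hco
  have hz := sumsq_zero (fun p => (a - b) p) (by linarith)
  funext p
  have := hz p
  simp only [Pi.sub_apply] at this
  linarith

lemma inj_lmLy [NeZero Nx] [NeZero Ny] {hy : ℝ} (hhy : 0 < hy) :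
    Function.Injective (lmLy (Nx := Nx) (Ny := Ny) hy) := by
  intro a b hab
  have h0 : opLy hy (a - b) = 0 := by
    have h := map_sub (lmLy (Nx := Nx) (Ny := Ny) hy) a b
    rw [hab, sub_self] at h
    simpa using h
  have hco := coer_opLy hhy (a - b)
  rw [h0] at hco
  simp only [Pi.zero_apply, zero_mul, Finset.sum_const_zero] at hco
  have hz := sumsq_zero (fun p => (a - b) p) (by linarith)
  funext p
  have := hz p
  simp only [Pi.sub_apply] at this
  linarith

lemma surj_opLL [NeZero Nx] [NeZero Ny] {hx hy : ℝ} (hhx : 0 < hx) (hhy : 0 < hy) :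
    Function.Surjective (opLL (Nx := Nx) (Ny := Ny) hx hy) := by
  intro C
  obtain ⟨a, ha⟩ := (LinearMap.injective_iff_surjective.mp (inj_lmLx (Nx := Nx) (Ny := Ny) hhx)) C
  obtain ⟨b, hb⟩ := (LinearMap.injective_iff_surjective.mp (inj_lmLy (Nx := Nx) (Ny := Ny) hhy)) a
  refine ⟨b, ?_⟩
  show opLx hx (opLy hy b) = C
  simp only [lmLx_apply, lmLy_apply] at ha hb
  rw [hb, ha]

/-- The linear operator of the homogeneous concentration-step system. -/
noncomputable def bigTfun (hx hy Δt : ℝ) (φ qP Dx Dy Ux Uy : GridFn Nx Ny)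
    (z : GV Nx Ny) : GV Nx Ny :=
  (fun p => opLL hx hy (fun q => φ q * z.1 q / Δt) p
      + opLy hy (dxf hx (fun q => z.2.2.2.1 q / 2)) p
      + opLx hx (dyf hy (fun q => z.2.2.2.2 q / 2)) p
      - opLL hx hy (fun q => qP q * z.1 q / 2) p,
   fun p => opLx hx z.2.1 p + dxc hx z.1 p,
   fun p => opLy hy z.2.2.1 p + dyc hy z.1 p,
   fun p => z.2.2.2.1 p - Ux p * Tx z.1 p - Dx p * z.2.1 p,
   fun p => z.2.2.2.2 p - Uy p * Ty z.1 p - Dy p * z.2.2.1 p)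

/-- The linear operator as a bundled linear map. -/
noncomputable def lmT (hx hy Δt : ℝ) (φ qP Dx Dy Ux Uy : GridFn Nx Ny) :
    GV Nx Ny →ₗ[ℝ] GV Nx Ny where
  toFun := bigTfun hx hy Δt φ qP Dx Dy Ux Uy
  map_add' a b := by
    obtain ⟨a1, a2, a3, a4, a5⟩ := a
    obtain ⟨b1, b2, b3, b4, b5⟩ := b
    simp only [bigTfun, Prod.mk_add_mk, Prod.mk.injEq]
    refine ⟨?_, ?_, ?_, ?_, ?_⟩ <;> funext p <;>
      simp only [opLL, opLx, opLy, dxx, dyy, dxf, dyf, dxc, dyc, Tx, Ty, Pi.add_apply] <;>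
      ring
  map_smul' c a := by
    obtain ⟨a1, a2, a3, a4, a5⟩ := a
    simp only [bigTfun, Prod.smul_mk, Prod.mk.injEq, RingHom.id_apply]
    refine ⟨?_, ?_, ?_, ?_, ?_⟩ <;> funext p <;>
      simp only [opLL, opLx, opLy, dxx, dyy, dxf, dyf, dxc, dyc, Tx, Ty, Pi.smul_apply,
        smul_eq_mul] <;>
      ring

@[simp] lemma lmT_apply (hx hy Δt : ℝ) (φ qP Dx Dy Ux Uy : GridFn Nx Ny) (z : GV Nx Ny) :
    lmT hx hy Δt φ qP Dx Dy Ux Uy z = bigTfun hx hy Δt φ qP Dx Dy Ux Uy z := rfl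

/-- The data vector of the concentration-step system. -/
noncomputable def bigB (hx hy Δt : ℝ) (φ qP Cn g Wxn Wyn : GridFn Nx Ny) : GV Nx Ny :=
  (fun p => opLL hx hy g p + opLL hx hy (fun q => φ q * Cn q / Δt) p
      - opLy hy (dxf hx (fun q => Wxn q / 2)) p
      - opLx hx (dyf hy (fun q => Wyn q / 2)) p
      + opLL hx hy (fun q => qP q * Cn q / 2) p,
   0, 0, 0, 0)

lemma system_iff (hx hy Δt : ℝ) (φ qP Dx Dy Ux Uy Cn g Wxn Wyn : GridFn Nx Ny)
    (z : GV Nx Ny) :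
    bigTfun hx hy Δt φ qP Dx Dy Ux Uy z = bigB hx hy Δt φ qP Cn g Wxn Wyn ↔
      ((∀ p, opLL hx hy (fun q => φ q * (z.1 q - Cn q) / Δt) p
          + opLy hy (dxf hx (fun q => (z.2.2.2.1 q + Wxn q) / 2)) p
          + opLx hx (dyf hy (fun q => (z.2.2.2.2 q + Wyn q) / 2)) p
          - opLL hx hy (fun q => qP q * (z.1 q + Cn q) / 2) p
        = opLL hx hy g p) ∧
      (∀ p, opLx hx z.2.1 p + dxc hx z.1 p = 0) ∧
      (∀ p, opLy hy z.2.2.1 p + dyc hy z.1 p = 0) ∧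
      (∀ p, z.2.2.2.1 p = Ux p * Tx z.1 p + Dx p * z.2.1 p) ∧
      (∀ p, z.2.2.2.2 p = Uy p * Ty z.1 p + Dy p * z.2.2.1 p)) := by
  obtain ⟨C, Vx, Vy, Wx, Wy⟩ := z
  simp only [bigTfun, bigB, Prod.mk.injEq, funext_iff, Pi.zero_apply]
  refine and_congr ?_ (and_congr Iff.rfl (and_congr Iff.rfl (and_congr ?_ ?_)))
  · refine forall_congr' fun p => ?_
    have hid : (opLL hx hy (fun q => φ q * C q / Δt) p
          + opLy hy (dxf hx (fun q => Wx q / 2)) p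
          + opLx hx (dyf hy (fun q => Wy q / 2)) p
          - opLL hx hy (fun q => qP q * C q / 2) p)
        - (opLL hx hy g p + opLL hx hy (fun q => φ q * Cn q / Δt) p
          - opLy hy (dxf hx (fun q => Wxn q / 2)) p
          - opLx hx (dyf hy (fun q => Wyn q / 2)) p
          + opLL hx hy (fun q => qP q * Cn q / 2) p)
        = (opLL hx hy (fun q => φ q * (C q - Cn q) / Δt) p
          + opLy hy (dxf hx (fun q => (Wx q + Wxn q) / 2)) p
          + opLx hx (dyf hy (fun q => (Wy q + Wyn q) / 2)) p
          - opLL hx hy (fun q => qP q * (C q + Cn q) / 2) p)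
          - opLL hx hy g p := by
      simp only [opLL, opLx, opLy, dxx, dyy, dxf, dyf]
      ring
    constructor
    · intro h; linarith [hid, h]
    · intro h; linarith [hid, h]
  · refine forall_congr' fun p => ?_
    constructor
    · intro h; linarith [h]
    · intro h; linarith [h]
  · refine forall_congr' fun p => ?_
    constructor
    · intro h; linarith [h]
    · intro h; linarith [h]

set_option maxHeartbeats 1000000 in
/-- Injectivity of the homogeneous system under the time-step restriction. -/
lemma homog [NeZero Nx] [NeZero Ny] {hx hy Δt φstar dstar K₂ B : ℝ}
    (hhx : 0 < hx) (hhy : 0 < hy) (hφ : 0 < φstar) (hd : 0 < dstar)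
    (hK : 0 ≤ K₂) (hB : 0 ≤ B) (hΔt : 0 < Δt)
    (hτ : Δt ≤ φstar / (K₂ + 4 * (B * (B + 1) / (2 * dstar)) + 1))
    (φ qP Dx Dy Ux Uy : GridFn Nx Ny)
    (hφp : ∀ p, φstar ≤ φ p) (hqp : ∀ p, |qP p| ≤ K₂)
    (hDxp : ∀ p, dstar ≤ Dx p) (hDyp : ∀ p, dstar ≤ Dy p)
    (hUxp : ∀ p, |Ux p| ≤ B) (hUyp : ∀ p, |Uy p| ≤ B)
    (z : GV Nx Ny) (hz : bigTfun hx hy Δt φ qP Dx Dy Ux Uy z = 0) : z = 0 := by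
  set c1 : ℝ := B * (B + 1) / (2 * dstar) with hc1def
  have hc1 : 0 ≤ c1 := by positivity
  obtain ⟨C, Vx, Vy, Wx, Wy⟩ := z
  rw [show (0 : GV Nx Ny) = (0, 0, 0, 0, 0) from rfl] at hz
  simp only [bigTfun, Prod.mk.injEq, funext_iff, Pi.zero_apply] at hz
  obtain ⟨e1, e2, e3, e4, e5⟩ := hz
  have h4 : ∀ p, Wx p = Ux p * Tx C p + Dx p * Vx p := fun p => by linarith [e4 p]
  have h5 : ∀ p, Wy p = Uy p * Ty C p + Dy p * Vy p := fun p => by linarith [e5 p]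
  obtain ⟨u, hu⟩ := surj_opLL (Nx := Nx) (Ny := Ny) hhx hhy C
  -- identify Vx, Vy
  have hdxcC : dxc hx C = opLx hx (opLy hy (dxc hx u)) := by
    rw [← hu, dxc_opLL]
  have hdycC : dyc hy C = opLy hy (opLx hx (dyc hy u)) := by
    rw [← hu, dyc_opLL]
  have hVx : Vx = -(opLy hy (dxc hx u)) := by
    apply inj_lmLx (Nx := Nx) (Ny := Ny) hhx
    rw [map_neg]
    funext p
    have h2 := e2 p
    have h3 := congrFun hdxcC p
    simp only [lmLx_apply, Pi.neg_apply]
    linarith [h2, h3]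
  have hVy : Vy = -(opLx hx (dyc hy u)) := by
    apply inj_lmLy (Nx := Nx) (Ny := Ny) hhy
    rw [map_neg]
    funext p
    have h2 := e3 p
    have h3 := congrFun hdycC p
    simp only [lmLy_apply, Pi.neg_apply]
    linarith [h2, h3]
  -- energy identity
  have E0 : ∑ p : ZMod Nx × ZMod Ny,
      (opLL hx hy (fun q => φ q * C q / Δt) p * u p
        + opLy hy (dxf hx (fun q => Wx q / 2)) p * u p
        + opLx hx (dyf hy (fun q => Wy q / 2)) p * u p
        - opLL hx hy (fun q => qP q * C q / 2) p * u p) = 0 := by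
    apply Finset.sum_eq_zero
    intro p _
    have hre : opLL hx hy (fun q => φ q * C q / Δt) p * u p
        + opLy hy (dxf hx (fun q => Wx q / 2)) p * u p
        + opLx hx (dyf hy (fun q => Wy q / 2)) p * u p
        - opLL hx hy (fun q => qP q * C q / 2) p * u p
        = (opLL hx hy (fun q => φ q * C q / Δt) p
            + opLy hy (dxf hx (fun q => Wx q / 2)) p
            + opLx hx (dyf hy (fun q => Wy q / 2)) p
            - opLL hx hy (fun q => qP q * C q / 2) p) * u p := by ring
    rw [hre, e1 p, zero_mul]
  have hSA : ∑ p : ZMod Nx × ZMod Ny, opLL hx hy (fun q => φ q * C q / Δt) p * u p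
      = ∑ p : ZMod Nx × ZMod Ny, φ p * C p / Δt * C p := by
    rw [adj_opLL]
    exact Finset.sum_congr rfl fun p _ => by rw [congrFun hu p]
  have hSD : ∑ p : ZMod Nx × ZMod Ny, opLL hx hy (fun q => qP q * C q / 2) p * u p
      = ∑ p : ZMod Nx × ZMod Ny, qP p * C p / 2 * C p := by
    rw [adj_opLL]
    exact Finset.sum_congr rfl fun p _ => by rw [congrFun hu p]
  have hnvx : opLy hy (dxc hx u) = -Vx := by rw [hVx, neg_neg]
  have hnvy : opLx hx (dyc hy u) = -Vy := by rw [hVy, neg_neg]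
  have hSB : ∑ p : ZMod Nx × ZMod Ny, opLy hy (dxf hx (fun q => Wx q / 2)) p * u p
      = ∑ p : ZMod Nx × ZMod Ny, Wx p / 2 * Vx p := by
    rw [adj_opLy, sbp_x, dxc_opLy, hnvx]
    rw [show (∑ p : ZMod Nx × ZMod Ny, (fun q => Wx q / 2) p * (-Vx) p)
        = ∑ p : ZMod Nx × ZMod Ny, -(Wx p / 2 * Vx p) from
      Finset.sum_congr rfl fun p _ => by simp only [Pi.neg_apply]; ring]
    rw [Finset.sum_neg_distrib, neg_neg]
  have hSC : ∑ p : ZMod Nx × ZMod Ny, opLx hx (dyf hy (fun q => Wy q / 2)) p * u p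
      = ∑ p : ZMod Nx × ZMod Ny, Wy p / 2 * Vy p := by
    rw [adj_opLx, sbp_y, dyc_opLx, hnvy]
    rw [show (∑ p : ZMod Nx × ZMod Ny, (fun q => Wy q / 2) p * (-Vy) p)
        = ∑ p : ZMod Nx × ZMod Ny, -(Wy p / 2 * Vy p) from
      Finset.sum_congr rfl fun p _ => by simp only [Pi.neg_apply]; ring]
    rw [Finset.sum_neg_distrib, neg_neg]
  rw [Finset.sum_sub_distrib, Finset.sum_add_distrib, Finset.sum_add_distrib,
    hSA, hSB, hSC, hSD] at E0
  have hWxsub : ∑ p : ZMod Nx × ZMod Ny, Wx p / 2 * Vx p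
      = ∑ p : ZMod Nx × ZMod Ny, (Ux p * Tx C p + Dx p * Vx p) / 2 * Vx p :=
    Finset.sum_congr rfl fun p _ => by rw [h4 p]
  have hWysub : ∑ p : ZMod Nx × ZMod Ny, Wy p / 2 * Vy p
      = ∑ p : ZMod Nx × ZMod Ny, (Uy p * Ty C p + Dy p * Vy p) / 2 * Vy p :=
    Finset.sum_congr rfl fun p _ => by rw [h5 p]
  rw [hWxsub, hWysub] at E0
  -- bounds
  have hSCnn : (0 : ℝ) ≤ ∑ p : ZMod Nx × ZMod Ny, C p ^ 2 :=
    Finset.sum_nonneg fun p _ => sq_nonneg _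
  have hSVxnn : (0 : ℝ) ≤ ∑ p : ZMod Nx × ZMod Ny, Vx p ^ 2 :=
    Finset.sum_nonneg fun p _ => sq_nonneg _
  have hSVynn : (0 : ℝ) ≤ ∑ p : ZMod Nx × ZMod Ny, Vy p ^ 2 :=
    Finset.sum_nonneg fun p _ => sq_nonneg _
  have young : ∀ ux t v : ℝ, |ux| ≤ B → -(c1 * t ^ 2 + dstar / 2 * v ^ 2) ≤ ux * t * v := by
    intro ux t v hux
    have habs := abs_le.mp hux
    have hu2 : ux ^ 2 ≤ B ^ 2 := sq_le_sq' (by linarith) (by linarith)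
    have hkey : 2 * dstar * c1 = B * (B + 1) := by
      rw [hc1def]; field_simp
    have hkey2 : 2 * dstar * c1 * t ^ 2 = B * (B + 1) * t ^ 2 := by rw [hkey]
    have h2d : (0 : ℝ) < 2 * dstar := by linarith
    have h3 : 2 * dstar * (-(c1 * t ^ 2 + dstar / 2 * v ^ 2)) ≤ 2 * dstar * (ux * t * v) := by
      nlinarith [sq_nonneg (ux * t + dstar * v), hkey2, hu2, sq_nonneg t,
        mul_nonneg hB (sq_nonneg t)]
    exact le_of_mul_le_mul_left h3 h2d
  have Fx : dstar / 4 * ∑ p : ZMod Nx × ZMod Ny, Vx p ^ 2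
      - c1 / 2 * ∑ p : ZMod Nx × ZMod Ny, Tx C p ^ 2
      ≤ ∑ p : ZMod Nx × ZMod Ny, (Ux p * Tx C p + Dx p * Vx p) / 2 * Vx p := by
    have hpt : ∀ p : ZMod Nx × ZMod Ny, dstar / 4 * Vx p ^ 2 - c1 / 2 * Tx C p ^ 2
        ≤ (Ux p * Tx C p + Dx p * Vx p) / 2 * Vx p := by
      intro p
      have hy1 := young (Ux p) (Tx C p) (Vx p) (hUxp p)
      have hD : dstar * Vx p ^ 2 ≤ Dx p * Vx p ^ 2 :=
        mul_le_mul_of_nonneg_right (hDxp p) (sq_nonneg _)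
      nlinarith [hy1, hD]
    calc dstar / 4 * ∑ p : ZMod Nx × ZMod Ny, Vx p ^ 2
        - c1 / 2 * ∑ p : ZMod Nx × ZMod Ny, Tx C p ^ 2
        = ∑ p : ZMod Nx × ZMod Ny, (dstar / 4 * Vx p ^ 2 - c1 / 2 * Tx C p ^ 2) := by
          simp only [Finset.sum_sub_distrib, ← Finset.mul_sum]
      _ ≤ _ := Finset.sum_le_sum fun p _ => hpt p
  have Fy : dstar / 4 * ∑ p : ZMod Nx × ZMod Ny, Vy p ^ 2
      - c1 / 2 * ∑ p : ZMod Nx × ZMod Ny, Ty C p ^ 2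
      ≤ ∑ p : ZMod Nx × ZMod Ny, (Uy p * Ty C p + Dy p * Vy p) / 2 * Vy p := by
    have hpt : ∀ p : ZMod Nx × ZMod Ny, dstar / 4 * Vy p ^ 2 - c1 / 2 * Ty C p ^ 2
        ≤ (Uy p * Ty C p + Dy p * Vy p) / 2 * Vy p := by
      intro p
      have hy1 := young (Uy p) (Ty C p) (Vy p) (hUyp p)
      have hD : dstar * Vy p ^ 2 ≤ Dy p * Vy p ^ 2 :=
        mul_le_mul_of_nonneg_right (hDyp p) (sq_nonneg _)
      nlinarith [hy1, hD]
    calc dstar / 4 * ∑ p : ZMod Nx × ZMod Ny, Vy p ^ 2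
        - c1 / 2 * ∑ p : ZMod Nx × ZMod Ny, Ty C p ^ 2
        = ∑ p : ZMod Nx × ZMod Ny, (dstar / 4 * Vy p ^ 2 - c1 / 2 * Ty C p ^ 2) := by
          simp only [Finset.sum_sub_distrib, ← Finset.mul_sum]
      _ ≤ _ := Finset.sum_le_sum fun p _ => hpt p
  have F5x : ∑ p : ZMod Nx × ZMod Ny, Tx C p ^ 2
      ≤ 25 / 16 * ∑ p : ZMod Nx × ZMod Ny, C p ^ 2 := by
    have hsm : ∑ p : ZMod Nx × ZMod Ny, C (p.1 - 1, p.2) ^ 2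
        = ∑ p : ZMod Nx × ZMod Ny, C p ^ 2 := by
      simpa [sub_eq_add_neg] using sum_shift_x (fun q => C q ^ 2) (-1)
    have hs1 : ∑ p : ZMod Nx × ZMod Ny, C (p.1 + 1, p.2) ^ 2
        = ∑ p : ZMod Nx × ZMod Ny, C p ^ 2 := by
      simpa using sum_shift_x (fun q => C q ^ 2) 1
    have hs2 : ∑ p : ZMod Nx × ZMod Ny, C (p.1 + 2, p.2) ^ 2
        = ∑ p : ZMod Nx × ZMod Ny, C p ^ 2 := by
      simpa using sum_shift_x (fun q => C q ^ 2) 2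
    have hpt : ∀ p : ZMod Nx × ZMod Ny, Tx C p ^ 2
        ≤ 20 / 256 * (C (p.1 - 1, p.2) ^ 2 + 9 * C p ^ 2 + 9 * C (p.1 + 1, p.2) ^ 2
          + C (p.1 + 2, p.2) ^ 2) := by
      intro p
      simp only [Tx, div_pow]
      nlinarith [sq_nonneg (3 * C (p.1 - 1, p.2) + 3 * C p),
        sq_nonneg (3 * C (p.1 - 1, p.2) + 3 * C (p.1 + 1, p.2)),
        sq_nonneg (C (p.1 - 1, p.2) - C (p.1 + 2, p.2)),
        sq_nonneg (9 * C p - 9 * C (p.1 + 1, p.2)),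
        sq_nonneg (3 * C p + 3 * C (p.1 + 2, p.2)),
        sq_nonneg (3 * C (p.1 + 1, p.2) + 3 * C (p.1 + 2, p.2))]
    calc ∑ p : ZMod Nx × ZMod Ny, Tx C p ^ 2
        ≤ ∑ p : ZMod Nx × ZMod Ny, 20 / 256 * (C (p.1 - 1, p.2) ^ 2 + 9 * C p ^ 2
            + 9 * C (p.1 + 1, p.2) ^ 2 + C (p.1 + 2, p.2) ^ 2) :=
          Finset.sum_le_sum fun p _ => hpt p
      _ = 25 / 16 * ∑ p : ZMod Nx × ZMod Ny, C p ^ 2 := by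
          have e : ∀ p : ZMod Nx × ZMod Ny,
              20 / 256 * (C (p.1 - 1, p.2) ^ 2 + 9 * C p ^ 2 + 9 * C (p.1 + 1, p.2) ^ 2
                + C (p.1 + 2, p.2) ^ 2)
              = 20 / 256 * C (p.1 - 1, p.2) ^ 2 + 180 / 256 * C p ^ 2
                + 180 / 256 * C (p.1 + 1, p.2) ^ 2 + 20 / 256 * C (p.1 + 2, p.2) ^ 2 :=
            fun p => by ring
          simp only [e, Finset.sum_add_distrib, ← Finset.mul_sum]
          rw [hsm, hs1, hs2]; ring
  have F5y : ∑ p : ZMod Nx × ZMod Ny, Ty C p ^ 2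
      ≤ 25 / 16 * ∑ p : ZMod Nx × ZMod Ny, C p ^ 2 := by
    have hsm : ∑ p : ZMod Nx × ZMod Ny, C (p.1, p.2 - 1) ^ 2
        = ∑ p : ZMod Nx × ZMod Ny, C p ^ 2 := by
      simpa [sub_eq_add_neg] using sum_shift_y (fun q => C q ^ 2) (-1)
    have hs1 : ∑ p : ZMod Nx × ZMod Ny, C (p.1, p.2 + 1) ^ 2
        = ∑ p : ZMod Nx × ZMod Ny, C p ^ 2 := by
      simpa using sum_shift_y (fun q => C q ^ 2) 1
    have hs2 : ∑ p : ZMod Nx × ZMod Ny, C (p.1, p.2 + 2) ^ 2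
        = ∑ p : ZMod Nx × ZMod Ny, C p ^ 2 := by
      simpa using sum_shift_y (fun q => C q ^ 2) 2
    have hpt : ∀ p : ZMod Nx × ZMod Ny, Ty C p ^ 2
        ≤ 20 / 256 * (C (p.1, p.2 - 1) ^ 2 + 9 * C p ^ 2 + 9 * C (p.1, p.2 + 1) ^ 2
          + C (p.1, p.2 + 2) ^ 2) := by
      intro p
      simp only [Ty, div_pow]
      nlinarith [sq_nonneg (3 * C (p.1, p.2 - 1) + 3 * C p),
        sq_nonneg (3 * C (p.1, p.2 - 1) + 3 * C (p.1, p.2 + 1)),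
        sq_nonneg (C (p.1, p.2 - 1) - C (p.1, p.2 + 2)),
        sq_nonneg (9 * C p - 9 * C (p.1, p.2 + 1)),
        sq_nonneg (3 * C p + 3 * C (p.1, p.2 + 2)),
        sq_nonneg (3 * C (p.1, p.2 + 1) + 3 * C (p.1, p.2 + 2))]
    calc ∑ p : ZMod Nx × ZMod Ny, Ty C p ^ 2
        ≤ ∑ p : ZMod Nx × ZMod Ny, 20 / 256 * (C (p.1, p.2 - 1) ^ 2 + 9 * C p ^ 2
            + 9 * C (p.1, p.2 + 1) ^ 2 + C (p.1, p.2 + 2) ^ 2) :=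
          Finset.sum_le_sum fun p _ => hpt p
      _ = 25 / 16 * ∑ p : ZMod Nx × ZMod Ny, C p ^ 2 := by
          have e : ∀ p : ZMod Nx × ZMod Ny,
              20 / 256 * (C (p.1, p.2 - 1) ^ 2 + 9 * C p ^ 2 + 9 * C (p.1, p.2 + 1) ^ 2
                + C (p.1, p.2 + 2) ^ 2)
              = 20 / 256 * C (p.1, p.2 - 1) ^ 2 + 180 / 256 * C p ^ 2
                + 180 / 256 * C (p.1, p.2 + 1) ^ 2 + 20 / 256 * C (p.1, p.2 + 2) ^ 2 :=
            fun p => by ring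
          simp only [e, Finset.sum_add_distrib, ← Finset.mul_sum]
          rw [hsm, hs1, hs2]; ring
  have F3 : ∑ p : ZMod Nx × ZMod Ny, qP p * C p / 2 * C p
      ≤ K₂ / 2 * ∑ p : ZMod Nx × ZMod Ny, C p ^ 2 := by
    rw [Finset.mul_sum]
    apply Finset.sum_le_sum
    intro p _
    have hq := abs_le.mp (hqp p)
    nlinarith [sq_nonneg (C p), hq.1, hq.2]
  have F1 : (K₂ + 4 * c1 + 1) * ∑ p : ZMod Nx × ZMod Ny, C p ^ 2
      ≤ ∑ p : ZMod Nx × ZMod Ny, φ p * C p / Δt * C p := by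
    have hden : (0 : ℝ) < K₂ + 4 * c1 + 1 := by linarith
    have hstep : K₂ + 4 * c1 + 1 ≤ φstar / Δt := by
      rw [le_div_iff₀ hΔt]
      have h1 : Δt * (K₂ + 4 * c1 + 1) ≤ φstar := (le_div_iff₀ hden).mp hτ
      linarith [h1, mul_comm Δt (K₂ + 4 * c1 + 1)]
    calc (K₂ + 4 * c1 + 1) * ∑ p : ZMod Nx × ZMod Ny, C p ^ 2
        ≤ φstar / Δt * ∑ p : ZMod Nx × ZMod Ny, C p ^ 2 :=
          mul_le_mul_of_nonneg_right hstep hSCnn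
      _ ≤ ∑ p : ZMod Nx × ZMod Ny, φ p * C p / Δt * C p := by
          rw [Finset.mul_sum]
          apply Finset.sum_le_sum
          intro p _
          have h1 : φstar / Δt * C p ^ 2 ≤ φ p / Δt * C p ^ 2 :=
            mul_le_mul_of_nonneg_right ((div_le_div_iff_of_pos_right hΔt).mpr (hφp p)) (sq_nonneg _)
          calc φstar / Δt * C p ^ 2 ≤ φ p / Δt * C p ^ 2 := h1
            _ = φ p * C p / Δt * C p := by ring
  -- conclude C = 0
  have hF5x' : c1 / 2 * ∑ p : ZMod Nx × ZMod Ny, Tx C p ^ 2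
      ≤ c1 / 2 * (25 / 16 * ∑ p : ZMod Nx × ZMod Ny, C p ^ 2) :=
    mul_le_mul_of_nonneg_left F5x (by positivity)
  have hF5y' : c1 / 2 * ∑ p : ZMod Nx × ZMod Ny, Ty C p ^ 2
      ≤ c1 / 2 * (25 / 16 * ∑ p : ZMod Nx × ZMod Ny, C p ^ 2) :=
    mul_le_mul_of_nonneg_left F5y (by positivity)
  have hc1SC : (0 : ℝ) ≤ c1 * ∑ p : ZMod Nx × ZMod Ny, C p ^ 2 := mul_nonneg hc1 hSCnn
  have hKSC : (0 : ℝ) ≤ K₂ * ∑ p : ZMod Nx × ZMod Ny, C p ^ 2 := mul_nonneg hK hSCnn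
  have hdVx : (0 : ℝ) ≤ dstar / 4 * ∑ p : ZMod Nx × ZMod Ny, Vx p ^ 2 := by positivity
  have hdVy : (0 : ℝ) ≤ dstar / 4 * ∑ p : ZMod Nx × ZMod Ny, Vy p ^ 2 := by positivity
  have hSC0 : ∑ p : ZMod Nx × ZMod Ny, C p ^ 2 ≤ 0 := by
    nlinarith [E0, F1, Fx, Fy, hF5x', hF5y', F3, hc1SC, hKSC, hdVx, hdVy]
  have hCz : ∀ p, C p = 0 := sumsq_zero (fun p => C p) hSC0
  have hCf : C = 0 := funext hCz
  have hVx0 : Vx = 0 := by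
    apply inj_lmLx (Nx := Nx) (Ny := Ny) hhx
    rw [map_zero]
    funext p
    have hdz : dxc hx C p = 0 := by simp [dxc, hCz]
    simp only [lmLx_apply, Pi.zero_apply]
    linarith [e2 p, hdz]
  have hVy0 : Vy = 0 := by
    apply inj_lmLy (Nx := Nx) (Ny := Ny) hhy
    rw [map_zero]
    funext p
    have hdz : dyc hy C p = 0 := by simp [dyc, hCz]
    simp only [lmLy_apply, Pi.zero_apply]
    linarith [e3 p, hdz]
  have hWx0 : Wx = 0 := by
    funext p
    have hT : Tx C p = 0 := by simp [Tx, hCz]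
    have hV : Vx p = 0 := by rw [hVx0]; rfl
    simp only [Pi.zero_apply]
    rw [h4 p, hT, hV]; ring
  have hWy0 : Wy = 0 := by
    funext p
    have hT : Ty C p = 0 := by simp [Ty, hCz]
    have hV : Vy p = 0 := by rw [hVy0]; rfl
    simp only [Pi.zero_apply]
    rw [h5 p, hT, hV]; ring
  rw [hCf, hVx0, hVy0, hWx0, hWy0]
  rfl

end Aux

/-- **Unique solvability of the discrete concentration step under a time-step
restriction (Theorem 3.2, Part II).**  There exists `τ* > 0`, depending only on
`φ_*, d_*, K₂, B`, such that for every time step `0 < Δt ≤ τ*` the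
Crank–Nicolson compact scheme for the concentration equation has a unique
solution `(C, Vˣ, Vʸ, Wˣ, Wʸ)`. -/
theorem concentration_step_unique_solvability
    (φstar dstar K₂ B : ℝ) (hφ : 0 < φstar) (hd : 0 < dstar)
    (hK : 0 ≤ K₂) (hB : 0 ≤ B) :
    ∃ τ : ℝ, 0 < τ ∧
      ∀ (Nx Ny : ℕ) [NeZero Nx] [NeZero Ny] (hx hy : ℝ),
        0 < hx → 0 < hy →
        ∀ Δt : ℝ, 0 < Δt → Δt ≤ τ →
        ∀ φ qP Dx Dy Ux Uy Cn g Wxn Wyn : GridFn Nx Ny,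
          (∀ p, φstar ≤ φ p) → (∀ p, |qP p| ≤ K₂) →
          (∀ p, dstar ≤ Dx p) → (∀ p, dstar ≤ Dy p) →
          (∀ p, |Ux p| ≤ B) → (∀ p, |Uy p| ≤ B) →
          ∃! CVW : GridFn Nx Ny × GridFn Nx Ny × GridFn Nx Ny
                     × GridFn Nx Ny × GridFn Nx Ny,
            (∀ p, opLL hx hy (fun q => φ q * (CVW.1 q - Cn q) / Δt) p
                + opLy hy (dxf hx (fun q => (CVW.2.2.2.1 q + Wxn q) / 2)) p
                + opLx hx (dyf hy (fun q => (CVW.2.2.2.2 q + Wyn q) / 2)) p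
                - opLL hx hy (fun q => qP q * (CVW.1 q + Cn q) / 2) p
              = opLL hx hy g p) ∧
            (∀ p, opLx hx CVW.2.1 p + dxc hx CVW.1 p = 0) ∧
            (∀ p, opLy hy CVW.2.2.1 p + dyc hy CVW.1 p = 0) ∧
            (∀ p, CVW.2.2.2.1 p = Ux p * Tx CVW.1 p + Dx p * CVW.2.1 p) ∧
            (∀ p, CVW.2.2.2.2 p = Uy p * Ty CVW.1 p + Dy p * CVW.2.2.1 p) := by
  have hc1 : (0 : ℝ) ≤ B * (B + 1) / (2 * dstar) := by positivity
  refine ⟨φstar / (K₂ + 4 * (B * (B + 1) / (2 * dstar)) + 1),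
    div_pos hφ (by linarith), ?_⟩
  intro Nx Ny _ _ hx hy hhx hhy Δt hΔt hΔτ φ qP Dx Dy Ux Uy Cn g Wxn Wyn
    hφp hqp hDxp hDyp hUxp hUyp
  have hinj : Function.Injective (lmT (Nx := Nx) (Ny := Ny) hx hy Δt φ qP Dx Dy Ux Uy) := by
    intro a b hab
    have h0 : bigTfun hx hy Δt φ qP Dx Dy Ux Uy (a - b) = 0 := by
      have h := map_sub (lmT (Nx := Nx) (Ny := Ny) hx hy Δt φ qP Dx Dy Ux Uy) a b
      rw [hab, sub_self] at h
      simpa using h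
    have hz := homog hhx hhy hφ hd hK hB hΔt hΔτ φ qP Dx Dy Ux Uy
      hφp hqp hDxp hDyp hUxp hUyp (a - b) h0
    exact sub_eq_zero.mp hz
  have hsurj : Function.Surjective (lmT (Nx := Nx) (Ny := Ny) hx hy Δt φ qP Dx Dy Ux Uy) :=
    LinearMap.injective_iff_surjective.mp hinj
  obtain ⟨z₀, hz₀⟩ := hsurj (bigB hx hy Δt φ qP Cn g Wxn Wyn)
  rw [lmT_apply] at hz₀
  refine ⟨z₀, (system_iff hx hy Δt φ qP Dx Dy Ux Uy Cn g Wxn Wyn z₀).mp hz₀, ?_⟩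
  intro y hy'
  have hy'' : bigTfun hx hy Δt φ qP Dx Dy Ux Uy y = bigB hx hy Δt φ qP Cn g Wxn Wyn :=
    (system_iff hx hy Δt φ qP Dx Dy Ux Uy Cn g Wxn Wyn y).mpr hy'
  exact hinj (show lmT hx hy Δt φ qP Dx Dy Ux Uy y = lmT hx hy Δt φ qP Dx Dy Ux Uy z₀ by
    rw [lmT_apply, lmT_apply, hy'', hz₀])
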